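/- arXiv:1808.00837 — 2 statements merged into one kernel-verified Lean document; each statement's English description precedes it below -/
import Mathlib

section
/- Let ℓ be an odd prime and k ≥ 1. Then s(ℓ^{k+1}) = ℓ^k · s(ℓ), where s(d) is the number of pairs (u, v) modulo d with gcd(uv, d) = 1 and u² + v² ≡ −1 (mod d). -/
/-- `s d` counts pairs `(u, v)` with `1 ≤ u, v ≤ d`, `gcd(u,d) = gcd(v,d) = 1`
and `u² + v² + 1 ≡ 0 (mod d)`. -/
def s (d : ℕ) : ℕ :=
  ((Finset.Icc 1 d ×ˢ Finset.Icc 1 d).filter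
    (fun p => Nat.gcd p.1 d = 1 ∧ Nat.gcd p.2 d = 1 ∧ (p.1 ^ 2 + p.2 ^ 2 + 1) % d = 0)).card

/-!
Hensel lifting. If `ℓ ∣ N`, the reduction `ZMod (N ℓ) → ZMod N` is surjective with square-zero
kernel. Fix a unit solution `(a, b)` of `u² + v² + 1 = 0` mod `N` and any lift `y` of `b`. Since
`2a` is a unit (`ℓ` is odd), one Newton step gives exactly one lift `x` of `a` with
`x² + y² + 1 = 0`, and lifts of units are units. Hence `(a, b)` has exactly as many lifts as `b`
has, namely `ℓ`, so `s (N ℓ) = ℓ s N`; iterate from `N = ℓ`.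
-/

open Finset

section SquareZeroLift

variable {R S : Type*} [CommRing R] [CommRing S] {π : R →+* S}

theorem isUnit_of_isUnit_map_of_sq_eq_zero (hπ : Function.Surjective π)
    (hsq : ∀ e, π e = 0 → e ^ 2 = 0) {x : R} (hx : IsUnit (π x)) : IsUnit x := by
  obtain ⟨v, hv⟩ := hx.exists_right_inv
  obtain ⟨z, rfl⟩ := hπ v
  have hnil : IsNilpotent (x * z - 1) :=
    ⟨2, hsq _ (by rw [map_sub, map_mul, hv, map_one, sub_self])⟩
  have hunit := hnil.isUnit_add_one
  rw [sub_add_cancel] at hunit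
  exact isUnit_of_mul_isUnit_left hunit

theorem existsUnique_lift_of_sq_add_sq_add_one_eq_zero (hπ : Function.Surjective π)
    (hsq : ∀ e, π e = 0 → e ^ 2 = 0) {a b : S} (ha : IsUnit (2 * a))
    (hab : a ^ 2 + b ^ 2 + 1 = 0) {y : R} (hy : π y = b) :
    ∃! x, π x = a ∧ x ^ 2 + y ^ 2 + 1 = 0 := by
  have hlift : ∀ x, π x = a → ∃ w, 2 * x * w = 1 := fun x hx =>
    (isUnit_of_isUnit_map_of_sq_eq_zero hπ hsq (by rwa [map_mul, map_ofNat, hx])).exists_right_inv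
  obtain ⟨x₀, hx₀⟩ := hπ a
  obtain ⟨w, hw⟩ := hlift x₀ hx₀
  set F := x₀ ^ 2 + y ^ 2 + 1
  have hF : π F = 0 := by simp only [F, map_add, map_pow, map_one, hx₀, hy, hab]
  -- Newton step: the correction `F / (2 x₀)` lies in the kernel, so its square vanishes.
  have hcorr : (F * w) ^ 2 = 0 := hsq _ (by rw [map_mul, hF, zero_mul])
  set x₁ := x₀ - F * w
  have hx₁ : π x₁ = a := by rw [map_sub, hx₀, map_mul, hF, zero_mul, sub_zero]
  have hroot : x₁ ^ 2 + y ^ 2 + 1 = 0 := by linear_combination (-F) * hw + hcorr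
  refine ⟨x₁, ⟨hx₁, hroot⟩, fun x ⟨hx, hxy⟩ => ?_⟩
  obtain ⟨w₁, hw₁⟩ := hlift x₁ hx₁
  have hdiff : (x - x₁) ^ 2 = 0 := hsq _ (by rw [map_sub, hx, hx₁, sub_self])
  -- `x² - x₁² = 2 x₁ (x - x₁) + (x - x₁)²`, and `2 x₁` is a unit.
  linear_combination w₁ * (hxy - hroot - hdiff) - (x - x₁) * hw₁

end SquareZeroLift

open Classical in
noncomputable def unitSolutions (R : Type*) [CommRing R] [Fintype R] : Finset (R × R) :=
  {p | IsUnit p.1 ∧ IsUnit p.2 ∧ p.1 ^ 2 + p.2 ^ 2 + 1 = 0}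

theorem mem_unitSolutions {R : Type*} [CommRing R] [Fintype R] {p : R × R} :
    p ∈ unitSolutions R ↔ IsUnit p.1 ∧ IsUnit p.2 ∧ p.1 ^ 2 + p.2 ^ 2 + 1 = 0 := by
  classical
  simp [unitSolutions]

theorem card_unitSolutions_mul_card {R S : Type*} [CommRing R] [Fintype R] [CommRing S]
    [Fintype S] {π : R →+* S} (hπ : Function.Surjective π) (hsq : ∀ e, π e = 0 → e ^ 2 = 0)
    (h2 : IsUnit (2 : S)) :
    #(unitSolutions R) * Fintype.card S = Fintype.card R * #(unitSolutions S) := by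
  classical
  have hmaps : ∀ p ∈ unitSolutions R, Prod.map π π p ∈ unitSolutions S := by
    intro p hp
    obtain ⟨hx, hy, hxy⟩ := mem_unitSolutions.mp hp
    refine mem_unitSolutions.mpr ⟨hx.map π, hy.map π, ?_⟩
    simpa using congrArg π hxy
  have hfiber : ∀ q ∈ unitSolutions S,
      #{p ∈ unitSolutions R | Prod.map π π p = q} = #{y | π y = 0} := by
    rintro ⟨a, b⟩ hq
    obtain ⟨ha, hb, hab⟩ : IsUnit a ∧ IsUnit b ∧ a ^ 2 + b ^ 2 + 1 = 0 := mem_unitSolutions.mp hq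
    have hlift := fun {y} (hy : π y = b) =>
      existsUnique_lift_of_sq_add_sq_add_one_eq_zero hπ hsq (h2.mul ha) hab hy
    rw [AddMonoidHom.card_fiber_eq_of_mem_range π (hπ 0) (hπ b)]
    refine card_nbij (fun p => p.2) ?_ ?_ ?_
    · intro p hp
      exact mem_filter.mpr ⟨mem_univ _, congrArg Prod.snd (mem_filter.mp hp).2⟩
    · intro p hp p' hp' (hpp' : p.2 = p'.2)
      obtain ⟨hpR, hpq⟩ := mem_filter.mp hp
      obtain ⟨hp'R, hp'q⟩ := mem_filter.mp hp'
      have hy : π p.2 = b := congrArg Prod.snd hpq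
      refine Prod.ext ((hlift hy).unique ⟨congrArg Prod.fst hpq, (mem_unitSolutions.mp hpR).2.2⟩
        ⟨congrArg Prod.fst hp'q, ?_⟩) hpp'
      rw [hpp']
      exact (mem_unitSolutions.mp hp'R).2.2
    · intro y hy
      have hy : π y = b := (mem_filter.mp hy).2
      obtain ⟨x, ⟨hx, hxy⟩, -⟩ := hlift hy
      refine ⟨(x, y), mem_filter.mpr ⟨mem_unitSolutions.mpr ⟨?_, ?_, hxy⟩, by simp [hx, hy]⟩,
        rfl⟩
      · exact isUnit_of_isUnit_map_of_sq_eq_zero hπ hsq (hx ▸ ha)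
      · exact isUnit_of_isUnit_map_of_sq_eq_zero hπ hsq (hy ▸ hb)
  have hcard : Fintype.card R = Fintype.card S * #{y : R | π y = 0} := by
    rw [← card_univ, card_eq_sum_card_fiberwise (f := π) (t := univ) (fun _ _ => mem_univ _),
      sum_congr rfl fun b _ => AddMonoidHom.card_fiber_eq_of_mem_range π (hπ b) (hπ 0),
      sum_const, card_univ, smul_eq_mul]
  rw [card_eq_sum_card_fiberwise hmaps, sum_congr rfl hfiber, sum_const, smul_eq_mul, hcard]
  ring

namespace ZMod

theorem sq_eq_zero_of_castHom_eq_zero {d n : ℕ} (hdn : d ∣ n) (hnd : n ∣ d ^ 2) {e : ZMod n}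
    (he : castHom hdn (ZMod d) e = 0) : e ^ 2 = 0 := by
  obtain ⟨k, rfl⟩ := intCast_surjective e
  rw [map_intCast, intCast_zmod_eq_zero_iff_dvd] at he
  rw [← Int.cast_pow, intCast_zmod_eq_zero_iff_dvd]
  exact (Int.natCast_dvd_natCast.mpr hnd).trans (by simpa using pow_dvd_pow_of_dvd he 2)

theorem val_sub_one_add_one_mem_Icc {d : ℕ} [NeZero d] (x : ZMod d) :
    (x - 1).val + 1 ∈ Icc 1 d :=
  mem_Icc.mpr ⟨Nat.le_add_left _ _, (x - 1).val_lt⟩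

theorem natCast_val_sub_one_add_one {d : ℕ} [NeZero d] (x : ZMod d) :
    (((x - 1).val + 1 : ℕ) : ZMod d) = x := by
  rw [Nat.cast_add, natCast_zmod_val, Nat.cast_one, sub_add_cancel]

theorem val_natCast_sub_one_add_one {d u : ℕ} (hu : u ∈ Icc 1 d) :
    ((u : ZMod d) - 1).val + 1 = u := by
  obtain ⟨hu1, hud⟩ := mem_Icc.mp hu
  rw [← Nat.cast_one, ← Nat.cast_sub hu1, val_natCast, Nat.mod_eq_of_lt (by omega)]
  omega

end ZMod

theorem natCast_mem_unitSolutions_iff {d : ℕ} [NeZero d] (u v : ℕ) :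
    ((u : ZMod d), (v : ZMod d)) ∈ unitSolutions (ZMod d) ↔
      u.gcd d = 1 ∧ v.gcd d = 1 ∧ (u ^ 2 + v ^ 2 + 1) % d = 0 := by
  rw [mem_unitSolutions, ZMod.isUnit_iff_coprime, ZMod.isUnit_iff_coprime,
    ← Nat.dvd_iff_mod_eq_zero, ← ZMod.natCast_eq_zero_iff]
  push_cast
  rfl

theorem s_eq_card_unitSolutions (d : ℕ) [NeZero d] : s d = #(unitSolutions (ZMod d)) := by
  refine card_nbij' (fun p => ((p.1 : ZMod d), (p.2 : ZMod d)))
    (fun q => ((q.1 - 1).val + 1, (q.2 - 1).val + 1)) ?_ ?_ ?_ ?_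
  · intro p hp
    exact (natCast_mem_unitSolutions_iff p.1 p.2).mpr (mem_filter.mp hp).2
  · intro q hq
    refine mem_filter.mpr ⟨mem_product.mpr ⟨ZMod.val_sub_one_add_one_mem_Icc _,
      ZMod.val_sub_one_add_one_mem_Icc _⟩, (natCast_mem_unitSolutions_iff _ _).mp ?_⟩
    rwa [ZMod.natCast_val_sub_one_add_one, ZMod.natCast_val_sub_one_add_one]
  · intro p hp
    obtain ⟨hu, hv⟩ := mem_product.mp (mem_filter.mp hp).1
    exact Prod.ext (ZMod.val_natCast_sub_one_add_one hu) (ZMod.val_natCast_sub_one_add_one hv)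
  · intro q _
    exact Prod.ext (ZMod.natCast_val_sub_one_add_one _) (ZMod.natCast_val_sub_one_add_one _)

theorem s_mul_eq_mul_s_of_dvd_of_dvd_sq {d n : ℕ} (hd : Odd d) (hdn : d ∣ n) (hnd : n ∣ d ^ 2) :
    s n * d = n * s d := by
  have : NeZero d := ⟨hd.pos.ne'⟩
  have : NeZero n := NeZero.of_pos (Nat.pos_of_dvd_of_pos hnd (pow_pos hd.pos 2))
  have h2 : IsUnit (2 : ZMod d) := by
    simpa using (ZMod.isUnit_iff_coprime 2 d).mpr (Nat.coprime_two_left.mpr hd)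
  have key := card_unitSolutions_mul_card (ZMod.castHom_surjective hdn)
    (fun _ => ZMod.sq_eq_zero_of_castHom_eq_zero hdn hnd) h2
  rwa [ZMod.card, ZMod.card, ← s_eq_card_unitSolutions, ← s_eq_card_unitSolutions] at key

theorem s_prime_pow_succ {ℓ : ℕ} (hℓ : ℓ.Prime) (hodd : ℓ ≠ 2) {m : ℕ} (hm : 1 ≤ m) :
    s (ℓ ^ (m + 1)) = ℓ * s (ℓ ^ m) := by
  have key := s_mul_eq_mul_s_of_dvd_of_dvd_sq (hℓ.odd_of_ne_two hodd).pow
    (pow_dvd_pow ℓ m.le_succ) (by rw [← pow_mul]; exact pow_dvd_pow ℓ (by omega))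
  apply Nat.eq_of_mul_eq_mul_right (pow_pos hℓ.pos m)
  rw [key, pow_succ]
  ring

theorem stmt_6_general (ℓ : ℕ) (hℓ : ℓ.Prime) (hodd : ℓ ≠ 2) (k : ℕ) :
    s (ℓ ^ (k + 1)) = ℓ ^ k * s ℓ := by
  induction k with
  | zero => simp
  | succ k ih => rw [s_prime_pow_succ hℓ hodd (Nat.le_add_left 1 k), ih, pow_succ]; ring

theorem stmt_6 (ℓ : ℕ) (hℓ : ℓ.Prime) (hodd : ℓ ≠ 2) (k : ℕ) (hk : 1 ≤ k) :
    s (ℓ ^ (k + 1)) = ℓ ^ k * s ℓ :=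
  stmt_6_general ℓ hℓ hodd k
end

section
/- For odd squarefree d with gcd(d, 2mn) = 1, the Salié sum T(m, n; d) = ∑_{x mod d, gcd(x,d)=1} (x/d) e((m x̄ + n x)/d) satisfies |T(m, n; d)| ≤ 2^{ω(d)} √d, where ω(d) is the number of distinct prime factors of d. -/
noncomputable def e (x : ℝ) : ℂ := Complex.exp (2 * Real.pi * Complex.I * x)

/-- The Salié sum `T(m, n; d) = ∑_{x mod d, (x,d)=1} (x/d) e((m x̄ + n x)/d)`,
where `x̄` is the multiplicative inverse of `x` modulo `d`. -/
noncomputable def T (m n : ℤ) (d : ℕ) : ℂ :=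
  ∑ x ∈ (Finset.range d).filter (fun x => Nat.gcd x d = 1),
    (jacobiSym (x : ℤ) d : ℂ) *
      e (((m : ℝ) * ((((x : ZMod d)⁻¹).val : ℕ) : ℝ) + (n : ℝ) * (x : ℝ)) / (d : ℝ))

/-!
By the Chinese remainder theorem the Salié sum is twisted-multiplicative in `d`, so for squarefree
`d` it factors into Salié sums to prime moduli `p ∤ 2mn`, where the Jacobi symbol is the quadratic
character `χ` of `𝔽_p`. If `mn` is not a square mod `p`, the substitution `x ↦ (m/n) x⁻¹` shows
that the sum vanishes. If `mn = c²`, the substitution `x ↦ (c/n) x` turns it into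
`∑ χ(x) e(c(x + x⁻¹)/p)`; grouping the `x` by `t = x + x⁻¹`, the sum of `χ` over each fibre is
`χ(t + 2) + χ(t - 2)`, so the sum equals `e(-2c/p) + e(2c/p)` times a quadratic Gauss sum, of
absolute value `√p`.
-/

open Finset

namespace FiniteField

theorem eq_or_eq_inv_of_add_inv_eq {F : Type*} [Field F] {x y : F} (hx : x ≠ 0) (hy : y ≠ 0)
    (h : y + y⁻¹ = x + x⁻¹) : y = x ∨ y = x⁻¹ := by
  have : (y - x) * (y - x⁻¹) = 0 := by
    field_simp at h ⊢
    linear_combination h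
  simpa [sub_eq_zero] using this

variable {F : Type*} [Field F] [Fintype F] [DecidableEq F]

theorem quadraticChar_mul_sq (a : F) {b : F} (hb : b ≠ 0) :
    quadraticChar F (a * b ^ 2) = quadraticChar F a := by
  rw [map_mul, quadraticChar_sq_one' hb, mul_one]

theorem quadraticChar_inv (a : F) : quadraticChar F a⁻¹ = quadraticChar F a := by
  rcases eq_or_ne a 0 with rfl | ha
  · simp
  rw [show a⁻¹ = a * a⁻¹ ^ 2 by field_simp, quadraticChar_mul_sq _ (inv_ne_zero ha)]

theorem quadraticChar_add_inv_add_two {x : F} (hx : x ≠ 0) (hx' : x ≠ -1) :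
    quadraticChar F (x + x⁻¹ + 2) = quadraticChar F x := by
  have hx1 : x + 1 ≠ 0 := fun h => hx' (eq_neg_of_add_eq_zero_left h)
  rw [show x + x⁻¹ + 2 = x⁻¹ * (x + 1) ^ 2 by field_simp; ring, quadraticChar_mul_sq _ hx1,
    quadraticChar_inv]

theorem quadraticChar_add_inv_sub_two {x : F} (hx : x ≠ 0) (hx' : x ≠ 1) :
    quadraticChar F (x + x⁻¹ - 2) = quadraticChar F x := by
  have hx1 : x - 1 ≠ 0 := sub_ne_zero.mpr hx'
  rw [show x + x⁻¹ - 2 = x⁻¹ * (x - 1) ^ 2 by field_simp; ring, quadraticChar_mul_sq _ hx1,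
    quadraticChar_inv]

theorem sum_quadraticChar_pair_inv (hF : ringChar F ≠ 2) (x : Fˣ) :
    ∑ y ∈ {x, x⁻¹}, quadraticChar F y
      = quadraticChar F (x + (x : F)⁻¹ + 2) + quadraticChar F (x + (x : F)⁻¹ - 2) := by
  have h2 : (2 : F) ≠ 0 := Ring.two_ne_zero hF
  by_cases hxx : x = x⁻¹
  · have hx2 : ((x : F) - 1) * ((x : F) + 1) = 0 := by
      have := congrArg (fun u : Fˣ => (x : F) * u) hxx
      simp only [Units.val_inv_eq_inv_val, mul_inv_cancel₀ x.ne_zero] at this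
      linear_combination this
    rw [← hxx, pair_eq_singleton, sum_singleton]
    rcases mul_eq_zero.mp hx2 with h | h
    · rw [sub_eq_zero.mp h, show (1 : F) + 1⁻¹ + 2 = 1 * 2 ^ 2 by norm_num,
        quadraticChar_mul_sq _ h2]
      norm_num
    · rw [eq_neg_of_add_eq_zero_left h, show (-1 : F) + (-1)⁻¹ - 2 = -1 * 2 ^ 2 by norm_num,
        quadraticChar_mul_sq _ h2]
      norm_num
  · have hx1 : (x : F) ≠ 1 := fun h => hxx (by ext; simp [h])
    have hxm1 : (x : F) ≠ -1 := fun h => hxx (by ext; simp [h])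
    rw [sum_pair hxx, Units.val_inv_eq_inv_val, quadraticChar_inv,
      quadraticChar_add_inv_add_two x.ne_zero hxm1, quadraticChar_add_inv_sub_two x.ne_zero hx1]

theorem quadraticChar_add_two_add_quadraticChar_sub_two_eq_zero (hF : ringChar F ≠ 2) {t : F}
    (ht : ∀ x : Fˣ, (x : F) + (x : F)⁻¹ ≠ t) :
    quadraticChar F (t + 2) + quadraticChar F (t - 2) = 0 := by
  have hnsq : ¬ IsSquare ((t + 2) * (t - 2)) := by
    rintro ⟨s, hs⟩
    have h2 : (2 : F) ≠ 0 := Ring.two_ne_zero hF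
    have hprod : ((t + s) / 2) * ((t - s) / 2) = 1 := by
      field_simp
      linear_combination hs
    refine ht (Units.mkOfMulEqOne _ _ hprod) ?_
    simp only [Units.val_mkOfMulEqOne, inv_eq_of_mul_eq_one_right hprod]
    field_simp
    ring
  have h := quadraticChar_neg_one_iff_not_isSquare.mpr hnsq
  rw [map_mul] at h
  have h₁ : t + 2 ≠ 0 := by rintro h'; simp [h'] at h
  have h₂ : t - 2 ≠ 0 := by rintro h'; simp [h'] at h
  rcases quadraticChar_dichotomy h₁ with h₁ | h₁ <;>
    rcases quadraticChar_dichotomy h₂ with h₂ | h₂ <;> rw [h₁, h₂] at h ⊢ <;> omega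

theorem sum_quadraticChar_filter_add_inv_eq (hF : ringChar F ≠ 2) (t : F) :
    ∑ x ∈ univ.filter (fun x : Fˣ => (x : F) + (x : F)⁻¹ = t), quadraticChar F x
      = quadraticChar F (t + 2) + quadraticChar F (t - 2) := by
  by_cases hsol : ∃ x : Fˣ, (x : F) + (x : F)⁻¹ = t
  · obtain ⟨x, rfl⟩ := hsol
    have hfiber : univ.filter (fun y : Fˣ => (y : F) + (y : F)⁻¹ = x + (x : F)⁻¹)
        = {x, x⁻¹} := by
      ext y
      simp only [mem_filter, mem_univ, true_and, mem_insert, mem_singleton, Units.ext_iff,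
        Units.val_inv_eq_inv_val]
      refine ⟨eq_or_eq_inv_of_add_inv_eq x.ne_zero y.ne_zero, ?_⟩
      rintro (h | h) <;> rw [h]
      rw [inv_inv, add_comm]
    rw [hfiber, sum_quadraticChar_pair_inv hF]
  · rw [filter_false_of_mem (fun x _ => not_exists.mp hsol x), sum_empty,
      quadraticChar_add_two_add_quadraticChar_sub_two_eq_zero hF (not_exists.mp hsol)]

noncomputable abbrev complexQuadraticChar (F : Type*) [Field F] [Fintype F] [DecidableEq F] :
    MulChar F ℂ :=
  (quadraticChar F).ringHomComp (Int.castRingHom ℂ)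

theorem norm_gaussSum_complexQuadraticChar (hF : ringChar F ≠ 2) {ψ : AddChar F ℂ}
    (hψ : ψ.IsPrimitive) : ‖gaussSum (complexQuadraticChar F) ψ‖ = √(Fintype.card F) := by
  have hχ : complexQuadraticChar F ≠ 1 :=
    (MulChar.ringHomComp_ne_one_iff (RingHom.injective_int _)).mpr (quadraticChar_ne_one hF)
  have hsq := gaussSum_sq hχ ((quadraticChar_isQuadratic F).comp _) hψ
  have hneg : ‖complexQuadraticChar F (-1)‖ = 1 := by
    rcases quadraticChar_dichotomy (neg_ne_zero.mpr (one_ne_zero' F)) with h | h <;>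
      simp [h]
  rw [← Real.sqrt_sq (norm_nonneg _), ← norm_pow, hsq, norm_mul, hneg, one_mul,
    Complex.norm_natCast]

theorem sum_quadraticChar_add_mul_addChar (ψ : AddChar F ℂ) (s c : F) :
    ∑ t, (quadraticChar F (t + s) : ℂ) * ψ (c * t)
      = ψ (-(c * s)) * gaussSum (complexQuadraticChar F) (ψ.mulShift c) := by
  rw [← (Equiv.subRight s).sum_comp, gaussSum, mul_sum]
  refine sum_congr rfl fun u _ => ?_
  rw [Equiv.subRight_apply, sub_add_cancel, mul_sub, sub_eq_add_neg, AddChar.map_add_eq_mul,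
    AddChar.mulShift_apply]
  simp only [MulChar.ringHomComp_apply, eq_intCast]
  ring

noncomputable def salieSum (ψ : AddChar F ℂ) (a b : F) : ℂ :=
  ∑ x : Fˣ, (quadraticChar F x : ℂ) * ψ (a * (x : F)⁻¹ + b * x)

theorem salieSum_self (hF : ringChar F ≠ 2) (ψ : AddChar F ℂ) (c : F) :
    salieSum ψ c c
      = (ψ (-(c * 2)) + ψ (c * 2)) * gaussSum (complexQuadraticChar F) (ψ.mulShift c) := by
  have hphase (x : Fˣ) : c * (x : F)⁻¹ + c * x = c * (x + (x : F)⁻¹) := by ring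
  simp only [salieSum, hphase]
  rw [← sum_fiberwise univ (fun x : Fˣ => (x : F) + (x : F)⁻¹)]
  have hfiber (t : F) : ∑ x ∈ univ.filter (fun x : Fˣ => (x : F) + (x : F)⁻¹ = t),
      (quadraticChar F x : ℂ) * ψ (c * (x + (x : F)⁻¹))
      = (quadraticChar F (t + 2) : ℂ) * ψ (c * t) + (quadraticChar F (t + -2) : ℂ) * ψ (c * t) := by
    rw [sum_congr rfl fun x hx => by rw [(mem_filter.mp hx).2], ← sum_mul, ← Int.cast_sum,
      sum_quadraticChar_filter_add_inv_eq hF, ← sub_eq_add_neg]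
    push_cast
    ring
  simp only [hfiber, sum_add_distrib, sum_quadraticChar_add_mul_addChar, mul_neg, neg_neg]
  ring

theorem salieSum_eq_zero_of_not_isSquare (ψ : AddChar F ℂ) {a b : F} (ha : a ≠ 0) (hb : b ≠ 0)
    (hab : ¬ IsSquare (a * b)) : salieSum ψ a b = 0 := by
  have hχ : quadraticChar F (a / b) = -1 := by
    rw [div_eq_mul_inv, ← quadraticChar_mul_sq _ hb]
    convert quadraticChar_neg_one_iff_not_isSquare.mpr hab using 2
    field_simp
  -- `x ↦ (a / b) x⁻¹` preserves the phase and flips the character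
  rw [← CharZero.eq_neg_self_iff, salieSum]
  conv_lhs => rw [← ((Equiv.inv Fˣ).trans
    (Equiv.mulLeft (Units.mk0 (a / b) (div_ne_zero ha hb)))).sum_comp]
  rw [← sum_neg_distrib]
  refine sum_congr rfl fun x _ => ?_
  simp only [Equiv.trans_apply, Equiv.inv_apply, Equiv.coe_mulLeft, Units.val_mul,
    Units.val_mk0, Units.val_inv_eq_inv_val, map_mul, hχ, quadraticChar_inv]
  have hx := x.ne_zero
  rw [show a * (a / b * (x : F)⁻¹)⁻¹ + b * (a / b * (x : F)⁻¹) = a * (x : F)⁻¹ + b * x by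
    field_simp; ring]
  push_cast
  ring

theorem salieSum_eq_of_mul_eq_sq (ψ : AddChar F ℂ) {a b c : F} (hb : b ≠ 0) (hc : c ≠ 0)
    (habc : a * b = c ^ 2) : salieSum ψ a b = quadraticChar F (c / b) * salieSum ψ c c := by
  rw [salieSum, salieSum, ← Equiv.sum_comp (Equiv.mulLeft (Units.mk0 (c / b) (div_ne_zero hc hb))),
    mul_sum]
  refine sum_congr rfl fun y _ => ?_
  have hy := y.ne_zero
  have ha : a = c ^ 2 / b := by field_simp; exact habc
  simp only [Equiv.coe_mulLeft, Units.val_mul, Units.val_mk0, map_mul, Int.cast_mul]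
  rw [show a * (c / b * y)⁻¹ + b * (c / b * y) = c * (y : F)⁻¹ + c * y by
    rw [ha]; field_simp]
  ring

theorem norm_salieSum_le (hF : ringChar F ≠ 2) {ψ : AddChar F ℂ} (hψ : ψ.IsPrimitive) {a b : F}
    (ha : a ≠ 0) (hb : b ≠ 0) : ‖salieSum ψ a b‖ ≤ 2 * √(Fintype.card F) := by
  by_cases hab : IsSquare (a * b)
  · obtain ⟨c, hc⟩ := hab
    have hc0 : c ≠ 0 := by rintro rfl; simp [ha, hb] at hc
    have hψc : (ψ.mulShift c).IsPrimitive := fun r hr => by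
      rw [AddChar.mulShift_mulShift]
      exact hψ (mul_ne_zero hc0 hr)
    have hχ : ‖(quadraticChar F (c / b) : ℂ)‖ = 1 := by
      rcases quadraticChar_dichotomy (div_ne_zero hc0 hb) with h | h <;> simp [h]
    have hphase : ‖ψ (-(c * 2)) + ψ (c * 2)‖ ≤ 2 :=
      (norm_add_le _ _).trans_eq (by simp only [AddChar.norm_apply]; norm_num)
    rw [salieSum_eq_of_mul_eq_sq ψ hb hc0 (by rw [hc, sq]), salieSum_self hF, norm_mul, norm_mul,
      hχ, one_mul, norm_gaussSum_complexQuadraticChar hF hψc]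
    gcongr
  · rw [salieSum_eq_zero_of_not_isSquare ψ ha hb hab, norm_zero]
    positivity

end FiniteField

namespace ZMod

theorem stdAddChar_natCast_mul {d k N : ℕ} [NeZero d] [NeZero N] (h : d * k = N) (y : ZMod N) :
    stdAddChar ((k : ZMod N) * y) = stdAddChar (castHom (Dvd.intro k h) (ZMod d) y) := by
  obtain ⟨j, rfl⟩ := intCast_surjective y
  have hk : (k : ℂ) ≠ 0 := by
    have := NeZero.ne N
    rw [← h] at this
    exact_mod_cast right_ne_zero_of_mul this
  rw [map_intCast, ← Int.cast_natCast, ← Int.cast_mul, stdAddChar_coe, stdAddChar_coe, ← h]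
  congr 1
  push_cast
  field_simp

theorem natCast_mul_val_inv_add_natCast_mul_val_inv {d₁ d₂ : ℕ} [NeZero d₁] [NeZero d₂]
    (h : d₁.Coprime d₂) :
    ((d₂ * ((d₂ : ZMod d₁)⁻¹).val + d₁ * ((d₁ : ZMod d₂)⁻¹).val : ℕ) : ZMod (d₁ * d₂)) = 1 := by
  rw [← Nat.cast_one, natCast_eq_natCast_iff, ← Nat.modEq_and_modEq_iff_modEq_mul h,
    ← natCast_eq_natCast_iff, ← natCast_eq_natCast_iff]
  push_cast
  simp only [natCast_self, zero_mul, add_zero, zero_add, natCast_zmod_val,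
    coe_mul_inv_eq_one _ h, coe_mul_inv_eq_one _ h.symm, and_self]

theorem stdAddChar_eq_mul_of_coprime {d₁ d₂ : ℕ} [NeZero d₁] [NeZero d₂] (h : d₁.Coprime d₂)
    (z : ZMod (d₁ * d₂)) :
    stdAddChar z = stdAddChar ((d₂ : ZMod d₁)⁻¹ * castHom (dvd_mul_right d₁ d₂) (ZMod d₁) z)
      * stdAddChar ((d₁ : ZMod d₂)⁻¹ * castHom (dvd_mul_left d₂ d₁) (ZMod d₂) z) := by
  set u₁ := ((d₂ : ZMod d₁)⁻¹).val
  set u₂ := ((d₁ : ZMod d₂)⁻¹).val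
  have hz : z = d₂ * (u₁ * z) + d₁ * (u₂ * z) := by
    conv_lhs => rw [← one_mul z, ← natCast_mul_val_inv_add_natCast_mul_val_inv h]
    push_cast
    ring
  conv_lhs => rw [hz]
  rw [AddChar.map_add_eq_mul, stdAddChar_natCast_mul rfl, stdAddChar_natCast_mul (mul_comm d₂ d₁)]
  simp only [u₁, u₂, map_mul, map_natCast, natCast_zmod_val]

theorem jacobiSym_val_castHom {d N : ℕ} [NeZero N] (h : d ∣ N) (x : ZMod N) :
    jacobiSym (castHom h (ZMod d) x).val d = jacobiSym x.val d := by
  rw [castHom_apply, ← natCast_val, val_natCast, Int.natCast_mod, ← jacobiSym.mod_left]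

def unitsChineseRemainder {d₁ d₂ : ℕ} (h : d₁.Coprime d₂) :
    (ZMod (d₁ * d₂))ˣ ≃* (ZMod d₁)ˣ × (ZMod d₂)ˣ :=
  (Units.mapEquiv (chineseRemainder h).toMulEquiv).trans MulEquiv.prodUnits

theorem coe_unitsChineseRemainder_fst {d₁ d₂ : ℕ} (h : d₁.Coprime d₂) (x : (ZMod (d₁ * d₂))ˣ) :
    ((unitsChineseRemainder h x).1 : ZMod d₁) = castHom (dvd_mul_right d₁ d₂) (ZMod d₁) x := by
  change (chineseRemainder h (x : ZMod (d₁ * d₂))).1 = _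
  simp [chineseRemainder]

theorem coe_unitsChineseRemainder_snd {d₁ d₂ : ℕ} (h : d₁.Coprime d₂) (x : (ZMod (d₁ * d₂))ˣ) :
    ((unitsChineseRemainder h x).2 : ZMod d₂) = castHom (dvd_mul_left d₂ d₁) (ZMod d₂) x := by
  change (chineseRemainder h (x : ZMod (d₁ * d₂))).2 = _
  simp [chineseRemainder]

noncomputable def salieSum {d : ℕ} [NeZero d] (a b : ZMod d) : ℂ :=
  ∑ x : (ZMod d)ˣ, (jacobiSym (x : ZMod d).val d : ℂ) *
    stdAddChar (a * ((x⁻¹ : (ZMod d)ˣ) : ZMod d) + b * (x : ZMod d))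

theorem salieSum_mul {d₁ d₂ : ℕ} [NeZero d₁] [NeZero d₂] (h : d₁.Coprime d₂)
    (a b : ZMod (d₁ * d₂)) :
    salieSum a b
      = salieSum ((d₂ : ZMod d₁)⁻¹ * castHom (dvd_mul_right d₁ d₂) (ZMod d₁) a)
          ((d₂ : ZMod d₁)⁻¹ * castHom (dvd_mul_right d₁ d₂) (ZMod d₁) b)
        * salieSum ((d₁ : ZMod d₂)⁻¹ * castHom (dvd_mul_left d₂ d₁) (ZMod d₂) a)
          ((d₁ : ZMod d₂)⁻¹ * castHom (dvd_mul_left d₂ d₁) (ZMod d₂) b) := by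
  rw [salieSum, salieSum, salieSum, sum_mul_sum, ← Fintype.sum_prod_type']
  refine Fintype.sum_equiv (unitsChineseRemainder h) _ _ fun x => ?_
  set e := unitsChineseRemainder h
  have hinv₁ : (((e x).1⁻¹ : (ZMod d₁)ˣ) : ZMod d₁)
      = castHom (dvd_mul_right d₁ d₂) (ZMod d₁) ((x⁻¹ : (ZMod (d₁ * d₂))ˣ) : ZMod (d₁ * d₂)) := by
    rw [← Prod.fst_inv, ← map_inv, coe_unitsChineseRemainder_fst]
  have hinv₂ : (((e x).2⁻¹ : (ZMod d₂)ˣ) : ZMod d₂)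
      = castHom (dvd_mul_left d₂ d₁) (ZMod d₂) ((x⁻¹ : (ZMod (d₁ * d₂))ˣ) : ZMod (d₁ * d₂)) := by
    rw [← Prod.snd_inv, ← map_inv, coe_unitsChineseRemainder_snd]
  simp only [EquivLike.coe_coe]
  rw [hinv₁, hinv₂, coe_unitsChineseRemainder_fst, coe_unitsChineseRemainder_snd,
    jacobiSym_val_castHom, jacobiSym_val_castHom, jacobiSym.mul_right,
    stdAddChar_eq_mul_of_coprime h]
  simp only [map_add, map_mul, Int.cast_mul]
  ring_nf

theorem salieSum_eq_finiteField_salieSum {p : ℕ} [Fact p.Prime] (a b : ZMod p) :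
    salieSum a b = FiniteField.salieSum stdAddChar a b := by
  refine sum_congr rfl fun x _ => ?_
  rw [← jacobiSym.legendreSym.to_jacobiSym, legendreSym, Int.cast_natCast, natCast_zmod_val,
    Units.val_inv_eq_inv_val]

theorem norm_salieSum_le {d : ℕ} [NeZero d] (hsq : Squarefree d) (hodd : Odd d) {a b : ZMod d}
    (ha : IsUnit a) (hb : IsUnit b) : ‖salieSum a b‖ ≤ 2 ^ d.primeFactors.card * √d := by
  revert a b
  refine Nat.recOnPosPrimePosCoprime (motive := fun d => ∀ [NeZero d], Squarefree d → Odd d →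
    ∀ {a b : ZMod d}, IsUnit a → IsUnit b → ‖salieSum a b‖ ≤ 2 ^ d.primeFactors.card * √d)
    ?_ ?_ ?_ ?_ d hsq hodd
  · intro p k hp hk _ hsq
    obtain rfl : k = 1 := ((Nat.squarefree_pow_iff hp.ne_one hk.ne').mp hsq).2
    revert hsq ‹NeZero (p ^ 1)›
    rw [pow_one]
    intro _ _ hodd a b ha hb
    have : Fact p.Prime := ⟨hp⟩
    have hF : ringChar (ZMod p) ≠ 2 := by
      rw [ringChar_zmod_n]; rintro rfl; exact absurd hodd (by decide)
    rw [hp.primeFactors, card_singleton, pow_one, salieSum_eq_finiteField_salieSum]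
    simpa only [card] using
      FiniteField.norm_salieSum_le hF (isPrimitive_stdAddChar p) ha.ne_zero hb.ne_zero
  · intro h
    exact absurd rfl h.ne
  · intro _ _ _ a b _ _
    simp [salieSum]
  · intro d₁ d₂ h₁ h₂ h ih₁ ih₂ _ hsq hodd a b ha hb
    have : NeZero d₁ := ⟨by omega⟩
    have : NeZero d₂ := ⟨by omega⟩
    have hu₁ : IsUnit (d₂ : ZMod d₁)⁻¹ := .of_mul_eq_one_right _ (coe_mul_inv_eq_one _ h.symm)
    have hu₂ : IsUnit (d₁ : ZMod d₂)⁻¹ := .of_mul_eq_one_right _ (coe_mul_inv_eq_one _ h)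
    obtain ⟨hodd₁, hodd₂⟩ := Nat.odd_mul.mp hodd
    rw [salieSum_mul h, norm_mul, h.primeFactors_mul,
      card_union_of_disjoint h.disjoint_primeFactors, pow_add, Nat.cast_mul,
      Real.sqrt_mul (Nat.cast_nonneg _)]
    calc _ ≤ (2 ^ d₁.primeFactors.card * √d₁) * (2 ^ d₂.primeFactors.card * √d₂) :=
          mul_le_mul (ih₁ hsq.of_mul_left hodd₁ (hu₁.mul (ha.map _)) (hu₁.mul (hb.map _)))
            (ih₂ hsq.of_mul_right hodd₂ (hu₂.mul (ha.map _)) (hu₂.mul (hb.map _)))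
            (norm_nonneg _) (by positivity)
      _ = _ := by ring

end ZMod

theorem e_intCast_div (j : ℤ) (d : ℕ) [NeZero d] :
    e ((j : ℝ) / (d : ℝ)) = ZMod.stdAddChar (j : ZMod d) := by
  rw [ZMod.stdAddChar_coe, e]
  push_cast
  ring_nf

theorem T_eq_salieSum (m n : ℤ) (d : ℕ) [NeZero d] :
    T m n d = ZMod.salieSum (m : ZMod d) (n : ZMod d) := by
  refine sum_nbij' (fun x => if h : x.gcd d = 1 then ZMod.unitOfCoprime x h else 1)
    (fun u => (u : ZMod d).val) (fun _ _ => mem_univ _) (fun u _ => ?_) (fun x hx => ?_)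
    (fun u _ => ?_) (fun x hx => ?_)
  · simpa using ⟨ZMod.val_lt _, ZMod.val_coe_unit_coprime u⟩
  · obtain ⟨hxd, hx⟩ : x < d ∧ x.gcd d = 1 := by simpa using hx
    simp [hx, ZMod.val_cast_of_lt hxd]
  · ext
    simp [ZMod.val_coe_unit_coprime u]
  · obtain ⟨hxd, hx⟩ : x < d ∧ x.gcd d = 1 := by simpa using hx
    have hphase : ((m : ℝ) * (((x : ZMod d)⁻¹.val : ℕ) : ℝ) + n * x)
        = ((m * ((x : ZMod d)⁻¹.val : ℤ) + n * x : ℤ) : ℝ) := by push_cast; ring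
    simp only [hx, dite_true, ZMod.coe_unitOfCoprime, ← ZMod.inv_coe_unit, hphase, e_intCast_div]
    push_cast
    rw [ZMod.val_cast_of_lt hxd, ZMod.natCast_zmod_val]

theorem stmt_15_general (d : ℕ) (hsq : Squarefree d) (m n : ℤ)
    (hcop : IsCoprime (d : ℤ) (2 * m * n)) :
    ‖T m n d‖ ≤ 2 ^ d.primeFactors.card * Real.sqrt d := by
  have : NeZero d := ⟨hsq.ne_zero⟩
  have hodd : Odd d := Nat.coprime_two_right.mp <| Nat.isCoprime_iff_coprime.mp <|
    by exact_mod_cast hcop.of_mul_right_left.of_mul_right_left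
  rw [T_eq_salieSum]
  exact ZMod.norm_salieSum_le hsq hodd
    ((ZMod.coe_int_isUnit_iff_isCoprime _ _).mpr hcop.of_mul_right_left.of_mul_right_right)
    ((ZMod.coe_int_isUnit_iff_isCoprime _ _).mpr hcop.of_mul_right_right)

theorem stmt_15 (d : ℕ) (hd : 0 < d) (hsq : Squarefree d) (m n : ℤ)
    (hcop : IsCoprime (d : ℤ) (2 * m * n)) :
    ‖T m n d‖ ≤ 2 ^ d.primeFactors.card * Real.sqrt d :=
  stmt_15_general d hsq m n hcop
end
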